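/- Validity of the convergence bound: let T_k, T̲_k, T̄_k be the aggregated, lower-envelope, and upper-envelope maps built from experts T̂_j : V → [0,1] with positive weights w_j, and suppose all maps take values in [0,1] and S(T̲_k) is nonempty. Then |C(T_k) − C(T_K)| ≤ C(T̲_k) − C(T̄_k) =: δ_k, where C(T) = min { f(τ; T) : τ ∈ S(T) } with f(τ; T) = Σ_{v ∈ τ}(1 − T(v))² + f'(τ) and S(T) = { τ ∈ P : ∀ v ∈ τ, T(v) ≥ θ }. -/

import Mathlib

/-- Cost of a path `τ` under traversability map `T` with auxiliary cost `f'`. -/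
def pathCost {V : Type*} (f' : List V → ℝ) (T : V → ℝ) (τ : List V) : ℝ :=
  (τ.map fun v => (1 - T v) ^ 2).sum + f' τ

/-- Feasible path set: paths in `P` all of whose vertices have traversability at least `θ`. -/
def feasSet {V : Type*} (P : Finset (List V)) (θ : ℝ) (T : V → ℝ) : Set (List V) :=
  {τ | τ ∈ P ∧ ∀ v ∈ τ, θ ≤ T v}

/-- Optimal path cost over the feasible set. -/
noncomputable def optCost {V : Type*} (P : Finset (List V)) (θ : ℝ)
    (f' : List V → ℝ) (T : V → ℝ) : ℝ :=
  sInf (pathCost f' T '' feasSet P θ T)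


/-!
Raising a map pointwise (while keeping it below `1`) enlarges the feasible set and lowers every
term `(1 - T v)²`, so `optCost` is antitone. Splitting the expert weights into the first `k` and
the remaining ones, both `T_k` and `T_K` lie pointwise between `T̲_k` and `T̄_k`, hence both
optimal costs lie in `[C(T̄_k), C(T̲_k)]`.
-/

open Finset

section WeightedAverage

variable {a b A B : ℝ}

lemma div_add_le_div (ha : 0 ≤ a) (hA : 0 < A) (hB : 0 ≤ B) : a / (A + B) ≤ a / A :=
  div_le_div_of_nonneg_left ha hA (le_add_of_nonneg_right hB)

lemma div_le_add_div_add (haA : a ≤ A) (hA : 0 < A) (hB : 0 ≤ B) :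
    a / A ≤ (a + B) / (A + B) := by
  rw [div_le_div_iff₀ hA (by linarith)]
  nlinarith

lemma add_div_add_le_one (haA : a ≤ A) (hA : 0 < A) (hB : 0 ≤ B) : (a + B) / (A + B) ≤ 1 :=
  (div_le_one (by linarith)).2 (by linarith)

end WeightedAverage

lemma weighted_sum_mem_Icc {ι : Type*} (s : Finset ι) {w x : ι → ℝ}
    (hw : ∀ j ∈ s, 0 ≤ w j) (hx : ∀ j ∈ s, 0 ≤ x j ∧ x j ≤ 1) :
    0 ≤ ∑ j ∈ s, w j * x j ∧ ∑ j ∈ s, w j * x j ≤ ∑ j ∈ s, w j :=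
  ⟨sum_nonneg fun j hj => mul_nonneg (hw j hj) (hx j hj).1,
    sum_le_sum fun j hj => mul_le_of_le_one_right (hw j hj) (hx j hj).2⟩

lemma sum_Icc_one_eq_add {M : Type*} [AddCommMonoid M] (f : ℕ → M) {k K : ℕ} (hkK : k ≤ K) :
    ∑ j ∈ Icc 1 K, f j = ∑ j ∈ Icc 1 k, f j + ∑ j ∈ Icc (k + 1) K, f j := by
  have hIcc (n : ℕ) : Icc 1 n = Ioc 0 n := Icc_add_one_left_eq_Ioc 0 n
  rw [hIcc, hIcc, Icc_add_one_left_eq_Ioc]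
  exact (sum_Ioc_consecutive f k.zero_le hkK).symm

section OptCost

variable {V : Type*} (P : Finset (List V)) (θ : ℝ) (f' : List V → ℝ) {T₁ T₂ : V → ℝ}

lemma feasSet_mono (h₁₂ : ∀ v, T₁ v ≤ T₂ v) : feasSet P θ T₁ ⊆ feasSet P θ T₂ :=
  fun _ hτ => ⟨hτ.1, fun v hv => (hτ.2 v hv).trans (h₁₂ v)⟩

lemma feasSet_finite : (feasSet P θ T₁).Finite :=
  P.finite_toSet.subset fun _ hτ => hτ.1

lemma pathCost_antitone (h₁₂ : ∀ v, T₁ v ≤ T₂ v) (h₂1 : ∀ v, T₂ v ≤ 1) (τ : List V) :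
    pathCost f' T₂ τ ≤ pathCost f' T₁ τ := by
  unfold pathCost
  gcongr with v
  exact List.sum_le_sum fun v _ => pow_le_pow_left₀ (by linarith [h₂1 v]) (by linarith [h₁₂ v]) 2

lemma optCost_antitone (h₁₂ : ∀ v, T₁ v ≤ T₂ v) (h₂1 : ∀ v, T₂ v ≤ 1)
    (hne : (feasSet P θ T₁).Nonempty) : optCost P θ f' T₂ ≤ optCost P θ f' T₁ := by
  refine le_csInf (hne.image _) ?_
  rintro _ ⟨τ, hτ, rfl⟩
  exact csInf_le_of_le ((feasSet_finite P θ).image _).bddBelow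
    ⟨τ, feasSet_mono P θ h₁₂ hτ, rfl⟩ (pathCost_antitone f' h₁₂ h₂1 τ)

lemma abs_optCost_sub_le_of_between {L U : V → ℝ} (hL₁ : ∀ v, L v ≤ T₁ v) (h₁U : ∀ v, T₁ v ≤ U v)
    (hL₂ : ∀ v, L v ≤ T₂ v) (h₂U : ∀ v, T₂ v ≤ U v) (hU1 : ∀ v, U v ≤ 1)
    (hne : (feasSet P θ L).Nonempty) :
    |optCost P θ f' T₁ - optCost P θ f' T₂| ≤ optCost P θ f' L - optCost P θ f' U := by
  have h₁1 v : T₁ v ≤ 1 := (h₁U v).trans (hU1 v)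
  have h₂1 v : T₂ v ≤ 1 := (h₂U v).trans (hU1 v)
  have hCL₁ := optCost_antitone P θ f' hL₁ h₁1 hne
  have hCL₂ := optCost_antitone P θ f' hL₂ h₂1 hne
  have hC₁U := optCost_antitone P θ f' h₁U hU1 (hne.mono (feasSet_mono P θ hL₁))
  have hC₂U := optCost_antitone P θ f' h₂U hU1 (hne.mono (feasSet_mono P θ hL₂))
  exact abs_sub_le_iff.2 ⟨by linarith, by linarith⟩

lemma abs_optCost_weightedAverage_sub_le (a b : V → ℝ) {A B : ℝ} (hA : 0 < A) (hB : 0 ≤ B)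
    (ha : ∀ v, 0 ≤ a v ∧ a v ≤ A) (hb : ∀ v, 0 ≤ b v ∧ b v ≤ B)
    (hne : (feasSet P θ fun v => a v / (A + B)).Nonempty) :
    |optCost P θ f' (fun v => a v / A) - optCost P θ f' (fun v => (a v + b v) / (A + B))|
      ≤ optCost P θ f' (fun v => a v / (A + B)) - optCost P θ f' (fun v => (a v + B) / (A + B)) := by
  have hAB : 0 ≤ A + B := by linarith
  refine abs_optCost_sub_le_of_between P θ f' (fun v => div_add_le_div (ha v).1 hA hB)
    (fun v => div_le_add_div_add (ha v).2 hA hB) (fun v => ?_) (fun v => ?_)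
    (fun v => add_div_add_le_one (ha v).2 hA hB) hne
  · exact div_le_div_of_nonneg_right (le_add_of_nonneg_right (hb v).1) hAB
  · exact div_le_div_of_nonneg_right (add_le_add_right (hb v).2 _) hAB

end OptCost

/-- Validity of the convergence bound on the path cost under incremental updates. -/
theorem convergence_bound_valid
    {V : Type*} (P : Finset (List V)) (θ : ℝ) (f' : List V → ℝ)
    (K : ℕ) (That : ℕ → V → ℝ) (w : ℕ → ℝ)
    (hw : ∀ j, 1 ≤ j → j ≤ K → 0 < w j)
    (hT : ∀ j, 1 ≤ j → j ≤ K → ∀ v, 0 ≤ That j v ∧ That j v ≤ 1)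
    (k : ℕ) (hk1 : 1 ≤ k) (hkK : k ≤ K)
    (hne : (feasSet P θ (fun v =>
      (∑ j ∈ Finset.Icc 1 k, w j * That j v) / (∑ j ∈ Finset.Icc 1 K, w j))).Nonempty) :
    |optCost P θ f' (fun v =>
        (∑ j ∈ Finset.Icc 1 k, w j * That j v) / (∑ j ∈ Finset.Icc 1 k, w j))
      - optCost P θ f' (fun v =>
        (∑ j ∈ Finset.Icc 1 K, w j * That j v) / (∑ j ∈ Finset.Icc 1 K, w j))|
    ≤ optCost P θ f' (fun v =>
        (∑ j ∈ Finset.Icc 1 k, w j * That j v) / (∑ j ∈ Finset.Icc 1 K, w j))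
      - optCost P θ f' (fun v =>
        (∑ j ∈ Finset.Icc 1 k, w j * That j v + ∑ j ∈ Finset.Icc (k+1) K, w j)
          / (∑ j ∈ Finset.Icc 1 K, w j)) := by
  have hk : Icc 1 k ⊆ Icc 1 K := Icc_subset_Icc_right hkK
  have htail : Icc (k + 1) K ⊆ Icc 1 K := Icc_subset_Icc_left (by omega)
  have hw' : ∀ j ∈ Icc 1 K, 0 ≤ w j := fun j hj => (hw j (mem_Icc.1 hj).1 (mem_Icc.1 hj).2).le
  have hT' v : ∀ j ∈ Icc 1 K, 0 ≤ That j v ∧ That j v ≤ 1 :=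
    fun j hj => hT j (mem_Icc.1 hj).1 (mem_Icc.1 hj).2 v
  simp only [sum_Icc_one_eq_add _ hkK] at hne ⊢
  refine abs_optCost_weightedAverage_sub_le P θ f' _ _ ?_ ?_
    (fun v => weighted_sum_mem_Icc _ (fun j hj => hw' j (hk hj)) fun j hj => hT' v j (hk hj))
    (fun v => weighted_sum_mem_Icc _ (fun j hj => hw' j (htail hj)) fun j hj => hT' v j (htail hj))
    hne
  · exact sum_pos (fun j hj => hw j (mem_Icc.1 hj).1 ((mem_Icc.1 hj).2.trans hkK))
      ⟨k, mem_Icc.2 ⟨hk1, le_rfl⟩⟩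
  · exact sum_nonneg fun j hj => hw' j (htail hj)
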